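/- arXiv:1004.0964 — 4 statements merged into one kernel-verified Lean document; each statement's English description precedes it below -/
import Mathlib

section
/- Let A be a commutative ring and let α₁, …, αₙ ∈ A satisfy αᵢ² = 0 for all i. Then the product, over all nonempty subsets S ⊆ {1, …, n}, of the factors (1 + (−1)^{|S|−1} · (|S|−1)! · ∏_{i∈S} αᵢ) equals 1 + α₁ + ⋯ + αₙ. -/
open Finset
open scoped Nat

/-! Write σ = ∑ αᵢ. Because the αᵢ square to zero, σᵏ = k! · ∑_{|T| = k} α_T, so
∑_T (-1)^{|T|} |T|! α_T is the geometric series of -σ, which terminates and inverts 1 + σ.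
Adding an element a to the index set adds the factors indexed by T ∪ {a}; each is 1 + α_a x_T,
and as α_a² = 0 their product is 1 + α_a ∑_T x_T = 1 + α_a (1 + σ)⁻¹. Multiplying by the
old product 1 + σ gives 1 + σ + α_a. -/

theorem Finset.sum_powersetCard_succ_insert {ι M : Type*} [DecidableEq ι] [AddCommMonoid M]
    {a : ι} {s : Finset ι} (ha : a ∉ s) (k : ℕ) (f : Finset ι → M) :
    ∑ T ∈ powersetCard (k + 1) (insert a s), f T
      = ∑ T ∈ powersetCard (k + 1) s, f T + ∑ T ∈ powersetCard k s, f (insert a T) := by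
  have hnot : ∀ T ∈ powersetCard k s, a ∉ T := fun T hT haT =>
    ha ((mem_powersetCard.1 hT).1 haT)
  rw [powersetCard_succ_insert ha, sum_union, sum_image]
  · intro T hT U hU h
    rw [← erase_insert (hnot T hT), ← erase_insert (hnot U hU), h]
  · rw [disjoint_left]
    rintro _ hT hU
    obtain ⟨U, hU, rfl⟩ := mem_image.1 hU
    exact ha ((mem_powersetCard.1 hT).1 (mem_insert_self a U))

section SquareZero

variable {A : Type*} [CommRing A]

theorem prod_one_add_mul_eq_one_add_mul_sum {ι : Type*} {β : A} (hβ : β ^ 2 = 0)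
    (u : Finset ι) (g : ι → A) :
    ∏ i ∈ u, (1 + β * g i) = 1 + β * ∑ i ∈ u, g i := by
  classical
  induction u using Finset.induction_on with
  | empty => simp
  | insert a u ha ih =>
    rw [prod_insert ha, ih, sum_insert ha]
    linear_combination (g a * ∑ i ∈ u, g i) * hβ

theorem add_pow_succ_of_sq_eq_zero {β : A} (hβ : β ^ 2 = 0) (x : A) (k : ℕ) :
    (x + β) ^ (k + 1) = x ^ (k + 1) + (k + 1) * β * x ^ k := by
  induction k with
  | zero => simp
  | succ k ih =>
    rw [pow_succ, ih]
    push_cast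
    linear_combination (k + 1 : A) * x ^ k * hβ

variable {ι : Type*} [DecidableEq ι] {α : ι → A}

theorem sum_pow_eq_factorial_mul_sum_powersetCard {s : Finset ι} (hs : ∀ i ∈ s, α i ^ 2 = 0)
    (k : ℕ) : (∑ i ∈ s, α i) ^ k = k ! * ∑ T ∈ powersetCard k s, ∏ i ∈ T, α i := by
  induction s using Finset.induction_on generalizing k with
  | empty =>
    cases k with
    | zero => simp
    | succ k => simp [powersetCard_eq_empty.2 (card_empty.trans_lt k.succ_pos)]
  | insert a s ha ih =>
    have hs' : ∀ i ∈ s, α i ^ 2 = 0 := fun i hi => hs i (mem_insert_of_mem hi)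
    cases k with
    | zero => simp
    | succ k =>
      have hnot : ∀ T ∈ powersetCard k s, a ∉ T := fun T hT haT =>
        ha ((mem_powersetCard.1 hT).1 haT)
      rw [sum_insert ha, add_comm, add_pow_succ_of_sq_eq_zero (hs a (mem_insert_self a s)),
        ih hs', ih hs', sum_powersetCard_succ_insert ha,
        sum_congr rfl fun T hT => prod_insert (hnot T hT), ← mul_sum, Nat.factorial_succ]
      push_cast
      ring

theorem one_add_sum_mul_sum_powerset_eq_one {s : Finset ι} (hs : ∀ i ∈ s, α i ^ 2 = 0) :
    (1 + ∑ i ∈ s, α i) * ∑ T ∈ s.powerset, (-1 : A) ^ #T * (#T)! * ∏ i ∈ T, α i = 1 := by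
  set σ := ∑ i ∈ s, α i
  have hgeom : ∑ T ∈ s.powerset, (-1 : A) ^ #T * (#T)! * ∏ i ∈ T, α i
      = ∑ k ∈ range (#s + 1), (-σ) ^ k := by
    rw [sum_powerset]
    refine sum_congr rfl fun k _ => ?_
    rw [neg_pow, sum_pow_eq_factorial_mul_sum_powersetCard hs, mul_sum, mul_sum]
    refine sum_congr rfl fun T hT => ?_
    rw [(mem_powersetCard.1 hT).2, mul_assoc]
  have hnil : σ ^ (#s + 1) = 0 := by
    rw [sum_pow_eq_factorial_mul_sum_powersetCard hs,
      powersetCard_eq_empty.2 (lt_add_one _), sum_empty, mul_zero]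
  rw [hgeom, ← sub_neg_eq_add, mul_neg_geom_sum, neg_pow, hnil, mul_zero, sub_zero]

theorem prod_powerset_nonempty_one_add_eq_one_add_sum (s : Finset ι)
    (hs : ∀ i ∈ s, α i ^ 2 = 0) :
    ∏ S ∈ s.powerset with S.Nonempty,
      (1 + (-1 : A) ^ (#S - 1) * ((#S - 1)! : A) * ∏ i ∈ S, α i) = 1 + ∑ i ∈ s, α i := by
  induction s using Finset.induction_on with
  | empty => simp [filter_singleton]
  | insert a s ha ih =>
    have hs' : ∀ i ∈ s, α i ^ 2 = 0 := fun i hi => hs i (mem_insert_of_mem hi)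
    have hnew : ∀ T ∈ s.powerset,
        (if (insert a T).Nonempty then
          1 + (-1 : A) ^ (#(insert a T) - 1) * ((#(insert a T) - 1)! : A)
            * ∏ i ∈ insert a T, α i else 1)
          = 1 + α a * ((-1 : A) ^ #T * (#T)! * ∏ i ∈ T, α i) := by
      intro T hT
      have haT : a ∉ T := fun h => ha (mem_powerset.1 hT h)
      rw [if_pos (insert_nonempty a T), card_insert_of_notMem haT, Nat.add_sub_cancel,
        prod_insert haT]
      ring
    rw [prod_filter, prod_powerset_insert ha, ← prod_filter, ih hs', prod_congr rfl hnew,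
      prod_one_add_mul_eq_one_add_mul_sum (hs a (mem_insert_self a s)), sum_insert ha]
    linear_combination α a * one_add_sum_mul_sum_powerset_eq_one hs'

end SquareZero

/-- Identity (4.2): for square-zero elements α₁,…,αₙ of a commutative ring,
the product over all nonempty subsets S of the factors
(1 + (−1)^{|S|−1}(|S|−1)!·∏_{i∈S} αᵢ) equals 1 + α₁ + ⋯ + αₙ. -/
theorem quotient_products_factorization_identity
    {A : Type*} [CommRing A] (n : ℕ) (α : Fin n → A)
    (hα : ∀ i, α i ^ 2 = 0) :
    ∏ S ∈ Finset.univ.filter (fun S : Finset (Fin n) => S.Nonempty),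
      (1 + (-1 : A) ^ (S.card - 1) * (Nat.factorial (S.card - 1) : A) * ∏ i ∈ S, α i)
      = 1 + ∑ i, α i := by
  rw [← powerset_univ]
  exact prod_powerset_nonempty_one_add_eq_one_add_sum univ fun i _ => hα i
end

section
/- Let A be a commutative ring, let α₁, …, αₙ ∈ A satisfy αᵢ² = 0 for all i, and for each nonempty subset S ⊆ {1, …, n} let w_S ∈ A be given. Then there exist elements v_S ∈ A, one for each nonempty subset S ⊆ {1, …, n}, such that 1 + Σ_{∅≠S⊆{1,…,n}} w_S · ∏_{i∈S} αᵢ = ∏_{∅≠S⊆{1,…,n}} (1 + v_S · ∏_{i∈S} αᵢ). -/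
/-!
Induct on the set of variables. Adjoining a new variable `a` to `s`, the element becomes
`P + Y * α a`, where `P` involves only the variables in `s`, and so factors by induction, and `Y`
lies in the subalgebra generated by them. The factors `1 + v α_S` are units with inverses
`1 - v α_S`, so `P + Y * α a = P * (1 + P⁻¹ Y * α a)` with `P⁻¹ Y` still in that subalgebra.
Because the `α i` are square-zero, this subalgebra is spanned by the monomials `α_T` with `T ⊆ s`;
writing `P⁻¹ Y = ∑ c_T α_T`, the square-zero element `α a` splits the last factor as
`∏_T (1 + c_T α_{T ∪ {a}})`.
-/

open Finset

section

variable {A : Type*} [CommRing A]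

theorem prod_one_add_mul_of_sq_eq_zero {ι : Type*} {x : A} (hx : x ^ 2 = 0) (s : Finset ι)
    (f : ι → A) : ∏ i ∈ s, (1 + f i * x) = 1 + (∑ i ∈ s, f i) * x := by
  induction s using Finset.cons_induction with
  | empty => simp
  | cons a s ha ih =>
    rw [prod_cons, ih, sum_cons]
    linear_combination (f a * ∑ i ∈ s, f i) * hx

theorem prod_one_add_mul_prod_one_sub_of_sq_eq_zero {ι : Type*} (s : Finset ι) (x : ι → A)
    (hx : ∀ i ∈ s, x i ^ 2 = 0) : (∏ i ∈ s, (1 + x i)) * ∏ i ∈ s, (1 - x i) = 1 := by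
  rw [← prod_mul_distrib]
  exact prod_eq_one fun i hi => by linear_combination -hx i hi

@[to_additive]
theorem prod_filter_nonempty_powerset_insert {ι M : Type*} [DecidableEq ι] [CommMonoid M] {a : ι}
    {s : Finset ι} (ha : a ∉ s) (f : Finset ι → M) :
    ∏ S ∈ (insert a s).powerset with S.Nonempty, f S =
      (∏ S ∈ s.powerset with S.Nonempty, f S) * ∏ T ∈ s.powerset, f (insert a T) := by
  simp only [prod_filter, prod_powerset_insert ha, insert_nonempty, if_true]

variable {ι : Type*} {α : ι → A}

theorem sq_prod_eq_zero (hα : ∀ i, α i ^ 2 = 0) {S : Finset ι} (hS : S.Nonempty) :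
    (∏ i ∈ S, α i) ^ 2 = 0 := by
  obtain ⟨i, hi⟩ := hS
  rw [← prod_pow]
  exact prod_eq_zero hi (hα i)

theorem mul_prod_mem_adjoin (r : A) {s T : Finset ι} (hT : T ⊆ s) :
    r * ∏ i ∈ T, α i ∈ Algebra.adjoin A (α '' s) :=
  Subalgebra.smul_mem _
    (Subalgebra.prod_mem _ fun _ hi => Algebra.subset_adjoin (Set.mem_image_of_mem α (hT hi))) r

variable [DecidableEq ι]

theorem prod_mul_prod_eq_zero_of_not_disjoint (hα : ∀ i, α i ^ 2 = 0) {S T : Finset ι}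
    (h : ¬Disjoint S T) : (∏ i ∈ S, α i) * ∏ i ∈ T, α i = 0 := by
  rw [← prod_union_inter, ← prod_sdiff inter_subset_union, mul_assoc, ← sq,
    sq_prod_eq_zero hα (not_disjoint_iff_nonempty_inter.1 h), mul_zero]

theorem prod_mul_prod_mem_span (hα : ∀ i, α i ^ 2 = 0) {s S T : Finset ι} (hS : S ⊆ s)
    (hT : T ⊆ s) : (∏ i ∈ S, α i) * ∏ i ∈ T, α i ∈
      Submodule.span A ((fun U => ∏ i ∈ U, α i) '' ↑s.powerset) := by
  by_cases h : Disjoint S T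
  · rw [← prod_union h]
    exact Submodule.subset_span ⟨S ∪ T, mem_coe.2 (mem_powerset.2 (union_subset hS hT)), rfl⟩
  · rw [prod_mul_prod_eq_zero_of_not_disjoint hα h]
    exact zero_mem _

theorem adjoin_le_span_prod (hα : ∀ i, α i ^ 2 = 0) (s : Finset ι) :
    Subalgebra.toSubmodule (Algebra.adjoin A (α '' s)) ≤
      Submodule.span A ((fun U => ∏ i ∈ U, α i) '' ↑s.powerset) := by
  set M := Submodule.span A ((fun U => ∏ i ∈ U, α i) '' ↑s.powerset)
  have hmul : M * M ≤ M := by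
    rw [Submodule.span_mul_span, Submodule.span_le]
    rintro _ ⟨_, ⟨S, hS, rfl⟩, _, ⟨T, hT, rfl⟩, rfl⟩
    exact prod_mul_prod_mem_span hα (mem_powerset.1 hS) (mem_powerset.1 hT)
  intro x hx
  induction hx using Algebra.adjoin_induction with
  | mem x hx =>
    obtain ⟨i, hi, rfl⟩ := hx
    exact Submodule.subset_span ⟨{i}, by simpa using hi, prod_singleton _ _⟩
  | algebraMap r =>
    rw [Algebra.algebraMap_eq_smul_one]
    exact Submodule.smul_mem _ r (Submodule.subset_span ⟨∅, by simp, prod_empty⟩)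
  | add x y _ _ hx hy => exact add_mem hx hy
  | mul x y _ _ hx hy => exact hmul (Submodule.mul_mem_mul hx hy)

theorem exists_eq_sum_mul_prod_of_mem_adjoin (hα : ∀ i, α i ^ 2 = 0) {s : Finset ι} {x : A}
    (hx : x ∈ Algebra.adjoin A (α '' s)) :
    ∃ c : Finset ι → A, x = ∑ T ∈ s.powerset, c T * ∏ i ∈ T, α i := by
  obtain ⟨c, hc⟩ :=
    (Submodule.mem_span_image_finset_iff_exists_fun' A).1 (adjoin_le_span_prod hα s hx)
  exact ⟨c, hc.symm⟩

theorem exists_one_add_mul_eq_prod (hα : ∀ i, α i ^ 2 = 0) {a : ι} {s : Finset ι} (ha : a ∉ s)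
    {y : A} (hy : y ∈ Algebra.adjoin A (α '' s)) :
    ∃ c : Finset ι → A, 1 + y * α a = ∏ T ∈ s.powerset, (1 + c T * ∏ i ∈ insert a T, α i) := by
  obtain ⟨c, rfl⟩ := exists_eq_sum_mul_prod_of_mem_adjoin hα hy
  refine ⟨c, (prod_one_add_mul_of_sq_eq_zero (hα a) _ _).symm.trans
    (prod_congr rfl fun T hT => ?_)⟩
  rw [prod_insert fun h => ha (mem_powerset.1 hT h), mul_left_comm _ (α a), mul_comm (α a)]

theorem prod_filter_nonempty_powerset_insert_one_add_ite {a : ι} {s : Finset ι} (ha : a ∉ s)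
    (v c : Finset ι → A) :
    ∏ S ∈ (insert a s).powerset with S.Nonempty,
        (1 + (if a ∈ S then c (S.erase a) else v S) * ∏ i ∈ S, α i) =
      (∏ S ∈ s.powerset with S.Nonempty, (1 + v S * ∏ i ∈ S, α i)) *
        ∏ T ∈ s.powerset, (1 + c T * ∏ i ∈ insert a T, α i) := by
  rw [prod_filter_nonempty_powerset_insert ha]
  congr 1
  · refine prod_congr rfl fun S hS => ?_
    rw [if_neg fun h => ha (mem_powerset.1 (mem_filter.1 hS).1 h)]
  · refine prod_congr rfl fun T hT => ?_
    rw [if_pos (mem_insert_self a T), erase_insert fun h => ha (mem_powerset.1 hT h)]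

theorem exists_one_add_sum_eq_prod (hα : ∀ i, α i ^ 2 = 0) (s : Finset ι) (w : Finset ι → A) :
    ∃ v : Finset ι → A, 1 + ∑ S ∈ s.powerset with S.Nonempty, w S * ∏ i ∈ S, α i =
      ∏ S ∈ s.powerset with S.Nonempty, (1 + v S * ∏ i ∈ S, α i) := by
  induction s using Finset.induction_on with
  | empty => exact ⟨w, by simp [filter_singleton]⟩
  | insert a s ha ih =>
    obtain ⟨v, hv⟩ := ih
    set Y := ∑ T ∈ s.powerset, w (insert a T) * ∏ i ∈ T, α i
    set Pinv := ∏ S ∈ s.powerset with S.Nonempty, (1 - v S * ∏ i ∈ S, α i)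
    have hP : (∏ S ∈ s.powerset with S.Nonempty, (1 + v S * ∏ i ∈ S, α i)) * Pinv = 1 :=
      prod_one_add_mul_prod_one_sub_of_sq_eq_zero _ _ fun S hS => by
        rw [mul_pow, sq_prod_eq_zero hα (mem_filter.1 hS).2, mul_zero]
    have hmem : Pinv * Y ∈ Algebra.adjoin A (α '' s) :=
      mul_mem (prod_mem fun S hS => sub_mem (one_mem _)
          (mul_prod_mem_adjoin _ (mem_powerset.1 (mem_filter.1 hS).1)))
        (sum_mem fun T hT => mul_prod_mem_adjoin _ (mem_powerset.1 hT))
    obtain ⟨c, hc⟩ := exists_one_add_mul_eq_prod hα ha hmem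
    have hY : ∑ T ∈ s.powerset, w (insert a T) * ∏ i ∈ insert a T, α i = Y * α a := by
      rw [sum_mul]
      refine sum_congr rfl fun T hT => ?_
      rw [prod_insert fun h => ha (mem_powerset.1 hT h)]
      ring
    refine ⟨fun S => if a ∈ S then c (S.erase a) else v S, ?_⟩
    rw [sum_filter_nonempty_powerset_insert ha, prod_filter_nonempty_powerset_insert_one_add_ite ha,
      ← hc, ← add_assoc, hv, hY]
    linear_combination (-(Y * α a)) * hP

end

/-- Step (4.1) of the proof of Lemma 4.3: any element of the form
1 + Σ_{∅≠S} w_S·α_S (with each αᵢ square-zero) factors as a product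
of elementary factors 1 + v_S·α_S. -/
theorem quotient_products_elementary_factorization
    {A : Type*} [CommRing A] (n : ℕ) (α : Fin n → A)
    (hα : ∀ i, α i ^ 2 = 0) (w : Finset (Fin n) → A) :
    ∃ v : Finset (Fin n) → A,
      1 + ∑ S ∈ Finset.univ.filter (fun S : Finset (Fin n) => S.Nonempty),
            w S * ∏ i ∈ S, α i
      = ∏ S ∈ Finset.univ.filter (fun S : Finset (Fin n) => S.Nonempty),
            (1 + v S * ∏ i ∈ S, α i) := by
  simpa only [powerset_univ] using exists_one_add_sum_eq_prod hα univ w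
end

section
/- Let k be a commutative ring, A an associative unital k-algebra, and d, d' : A → A derivations with d∘d = 0, d'∘d' = 0 and d∘d' = d'∘d. Then the k-bilinear operation x∗y := x·y + d(x)·d'(y) is an associative product on A, and 1 is a two-sided unit for ∗. -/
/-!
Expanding both bracketings of `x ∗ y ∗ z` by the Leibniz rule, the terms `xyz`, `dx·d'y·z`,
`dx·y·d'z` and `x·dy·d'z` occur on both sides. What is left is `d²x·d'y·d'z + dx·dd'y·d'z`
on the left and `dx·d'dy·d'z + dx·dy·d'²z` on the right, which agree because `d² = 0`,
`d'² = 0` and `dd' = d'd`. The unit survives because a derivation kills `1`.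
-/

theorem map_one_eq_zero_of_leibniz {A : Type*} [Ring A] (d : A →+ A)
    (hd : ∀ x y : A, d (x * y) = d x * y + x * d y) : d 1 = 0 := by
  simpa using hd 1 1

section TwistedMul

variable {A : Type*}

def twistedMul [NonUnitalNonAssocSemiring A] (d d' : A →+ A) (x y : A) : A :=
  x * y + d x * d' y

theorem twistedMul_assoc [NonUnitalSemiring A] (d d' : A →+ A)
    (hd : ∀ x y : A, d (x * y) = d x * y + x * d y)
    (hd' : ∀ x y : A, d' (x * y) = d' x * y + x * d' y)
    (hdd : ∀ x : A, d (d x) = 0) (hd'd' : ∀ x : A, d' (d' x) = 0)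
    (hcomm : ∀ x : A, d (d' x) = d' (d x)) (x y z : A) :
    twistedMul d d' (twistedMul d d' x y) z = twistedMul d d' x (twistedMul d d' y z) := by
  simp only [twistedMul, map_add, hd, hd', hdd, hd'd', hcomm, add_mul, mul_add, zero_mul,
    mul_zero, add_zero, mul_assoc]
  abel

theorem twistedMul_one [NonAssocSemiring A] (d d' : A →+ A) (h : d' 1 = 0) (x : A) :
    twistedMul d d' x 1 = x := by
  simp [twistedMul, h]

theorem one_twistedMul [NonAssocSemiring A] (d d' : A →+ A) (h : d 1 = 0) (x : A) :
    twistedMul d d' 1 x = x := by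
  simp [twistedMul, h]

end TwistedMul

/-- Algebraic model of Proposition 3.1: twisting an associative unital product
by a pair of square-zero, commuting derivations yields an associative product
with the same unit. -/
theorem twisted_product_associative_unital
    {k A : Type*} [CommRing k] [Ring A] [Algebra k A]
    (d d' : A →ₗ[k] A)
    (hd_leib : ∀ x y : A, d (x * y) = d x * y + x * d y)
    (hd'_leib : ∀ x y : A, d' (x * y) = d' x * y + x * d' y)
    (hdd : ∀ x : A, d (d x) = 0)
    (hd'd' : ∀ x : A, d' (d' x) = 0)
    (hcomm : ∀ x : A, d (d' x) = d' (d x))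
    (mul' : A → A → A)
    (hmul' : ∀ x y : A, mul' x y = x * y + d x * d' y) :
    (∀ x y z : A, mul' (mul' x y) z = mul' x (mul' y z)) ∧
    (∀ x : A, mul' x 1 = x) ∧ (∀ x : A, mul' 1 x = x) := by
  obtain rfl : mul' = twistedMul d.toAddMonoidHom d'.toAddMonoidHom := funext₂ hmul'
  exact ⟨twistedMul_assoc _ _ hd_leib hd'_leib hdd hd'd' hcomm,
    twistedMul_one _ _ (map_one_eq_zero_of_leibniz _ hd'_leib),
    one_twistedMul _ _ (map_one_eq_zero_of_leibniz _ hd_leib)⟩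
end

section
/- Let k be a commutative ring, A an associative unital k-algebra, and let d₁, …, d_m and d'₁, …, d'_m be derivations of A such that all 2m of these maps pairwise commute under composition and each composes with itself to zero (dᵢ∘dᵢ = 0 and d'ᵢ∘d'ᵢ = 0 for all i). For S ⊆ {1, …, m} let d_S denote the composite of the dᵢ with i ∈ S (the order is immaterial since they commute), and similarly d'_S. Then the k-bilinear operation x∗y := Σ_{S⊆{1,…,m}} d_S(x) · d'_S(y) is an associative product on A with two-sided unit 1. -/
/-!
The product is `μ ∘ ∏ᵢ (1 + dᵢ ⊗ d'ᵢ)`, and it is built up one factor at a time: since `dᵢ`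
commutes with every `D S`, splitting `Σ_{S ⊆ insert i s}` according to whether `i ∈ S` shows that
the product over `insert i s` is `x ∘ y = x ∗ y + dᵢx ∗ d'ᵢy`, where `∗` is the product over `s`.
The same commutations keep every `dⱼ` and `d'ⱼ` a derivation of `∗`. So everything reduces to a
single twist: if `δ, δ'` are commuting square-zero derivations of an associative product, then
`x ∘ y = xy + δx · δ'y` is again associative. Expanding both sides, the only terms that do not
match on sight are `δx · δ'(δy) · δ'z` and `δx · δ(δ'y) · δ'z`, which agree since `δδ' = δ'δ`;
the other terms produced by the Leibniz rule contain `δδ` or `δ'δ'`.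
-/

namespace LinearMap

variable {R M : Type*} [CommSemiring R] [AddCommMonoid M] [Module R M]

def IsAssoc (μ : M →ₗ[R] M →ₗ[R] M) : Prop :=
  ∀ x y z, μ (μ x y) z = μ x (μ y z)

def IsLeibniz (μ : M →ₗ[R] M →ₗ[R] M) (δ : Module.End R M) : Prop :=
  ∀ x y, δ (μ x y) = μ (δ x) y + μ x (δ y)

def twist (μ : M →ₗ[R] M →ₗ[R] M) (δ δ' : Module.End R M) : M →ₗ[R] M →ₗ[R] M :=
  μ + μ.compl₁₂ δ δ'

@[simp]
theorem twist_apply (μ : M →ₗ[R] M →ₗ[R] M) (δ δ' : Module.End R M) (x y : M) :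
    μ.twist δ δ' x y = μ x y + μ (δ x) (δ' y) :=
  rfl

theorem IsAssoc.twist {μ : M →ₗ[R] M →ₗ[R] M} {δ δ' : Module.End R M} (hμ : μ.IsAssoc)
    (hδ : μ.IsLeibniz δ) (hδ' : μ.IsLeibniz δ') (hδδ : ∀ x, δ (δ x) = 0)
    (hδ'δ' : ∀ x, δ' (δ' x) = 0) (hδδ' : ∀ x, δ (δ' x) = δ' (δ x)) :
    (μ.twist δ δ').IsAssoc := by
  unfold IsAssoc IsLeibniz at *
  intro x y z
  simp only [twist_apply, map_add, add_apply, hδ, hδ', hδδ, hδ'δ', hδδ', map_zero, zero_apply,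
    add_zero, zero_add, hμ]
  abel

theorem twist_left_unit {μ : M →ₗ[R] M →ₗ[R] M} {e : M} (he : ∀ x, μ e x = x)
    {δ : Module.End R M} (hδ : δ e = 0) (δ' : Module.End R M) (x : M) :
    μ.twist δ δ' e x = x := by
  simp [he, hδ]

theorem twist_right_unit {μ : M →ₗ[R] M →ₗ[R] M} {e : M} (he : ∀ x, μ x e = x)
    (δ : Module.End R M) {δ' : Module.End R M} (hδ' : δ' e = 0) (x : M) :
    μ.twist δ δ' x e = x := by
  simp [he, hδ']

theorem IsLeibniz.apply_eq_zero_of_unit {M : Type*} [AddCommGroup M] [Module R M]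
    {μ : M →ₗ[R] M →ₗ[R] M} {δ : Module.End R M} (hδ : μ.IsLeibniz δ) {e : M}
    (hl : ∀ x, μ e x = x) (hr : ∀ x, μ x e = x) : δ e = 0 := by
  have h := hδ e e
  rw [hl, hl, hr] at h
  exact left_eq_add.mp h

section Composites

variable {ι : Type*} [DecidableEq ι]

structure IsComposites (d : ι → Module.End R M) (D : Finset ι → Module.End R M) : Prop where
  empty_eq : D ∅ = LinearMap.id
  insert_eq : ∀ i S, i ∉ S → D (insert i S) = (d i).comp (D S)

variable {d : ι → Module.End R M} {D : Finset ι → Module.End R M}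

theorem IsComposites.apply_comm (hD : IsComposites d D) {δ : Module.End R M}
    (hδ : ∀ j x, δ (d j x) = d j (δ x)) (S : Finset ι) (x : M) : δ (D S x) = D S (δ x) := by
  induction S using Finset.induction_on generalizing x with
  | empty => simp [hD.empty_eq]
  | insert j S hj ih => rw [hD.insert_eq j S hj, comp_apply, comp_apply, hδ, ih]

theorem IsComposites.insert_apply (hD : IsComposites d D)
    (hdd : ∀ i j x, d i (d j x) = d j (d i x))
    {i : ι} {S : Finset ι} (hi : i ∉ S) (x : M) : D (insert i S) x = D S (d i x) := by
  rw [hD.insert_eq i S hi, comp_apply, hD.apply_comm (hdd i)]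

end Composites

section MultiTwist

variable {ι : Type*} {μ : M →ₗ[R] M →ₗ[R] M}
  {d d' : ι → Module.End R M} {D D' : Finset ι → Module.End R M}

def multiTwist (μ : M →ₗ[R] M →ₗ[R] M) (D D' : Finset ι → Module.End R M) (s : Finset ι) :
    M →ₗ[R] M →ₗ[R] M :=
  ∑ S ∈ s.powerset, μ.compl₁₂ (D S) (D' S)

theorem multiTwist_apply (μ : M →ₗ[R] M →ₗ[R] M) (D D' : Finset ι → Module.End R M)
    (s : Finset ι) (x y : M) :
    μ.multiTwist D D' s x y = ∑ S ∈ s.powerset, μ (D S x) (D' S y) := by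
  simp [multiTwist]

theorem IsComposites.multiTwist_empty [DecidableEq ι] (hD : IsComposites d D)
    (hD' : IsComposites d' D') :
    μ.multiTwist D D' ∅ = μ := by
  simp [multiTwist, hD.empty_eq, hD'.empty_eq]

theorem IsComposites.multiTwist_insert [DecidableEq ι] (hD : IsComposites d D)
    (hD' : IsComposites d' D')
    (hdd : ∀ i j x, d i (d j x) = d j (d i x)) (hd'd' : ∀ i j x, d' i (d' j x) = d' j (d' i x))
    {i : ι} {s : Finset ι} (hi : i ∉ s) :
    μ.multiTwist D D' (insert i s) = (μ.multiTwist D D' s).twist (d i) (d' i) := by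
  ext x y
  rw [twist_apply, multiTwist_apply, multiTwist_apply, multiTwist_apply,
    Finset.sum_powerset_insert hi]
  congr 1
  refine Finset.sum_congr rfl fun S hS => ?_
  have hiS : i ∉ S := fun h => hi (Finset.mem_powerset.mp hS h)
  rw [hD.insert_apply hdd hiS, hD'.insert_apply hd'd' hiS]

theorem IsLeibniz.multiTwist {δ : Module.End R M} (hδ : μ.IsLeibniz δ)
    (hD : ∀ S x, δ (D S x) = D S (δ x)) (hD' : ∀ S x, δ (D' S x) = D' S (δ x)) (s : Finset ι) :
    (μ.multiTwist D D' s).IsLeibniz δ := by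
  intro x y
  simp only [multiTwist_apply, map_sum, hδ _ _, hD, hD', Finset.sum_add_distrib]

theorem IsComposites.multiTwist_left_unit [DecidableEq ι] (hD : IsComposites d D)
    (hD' : IsComposites d' D') (hdd : ∀ i j x, d i (d j x) = d j (d i x))
    (hd'd' : ∀ i j x, d' i (d' j x) = d' j (d' i x)) {e : M} (he : ∀ x, μ e x = x)
    (hde : ∀ i, d i e = 0) (s : Finset ι) (x : M) : μ.multiTwist D D' s e x = x := by
  induction s using Finset.induction_on generalizing x with
  | empty => rw [hD.multiTwist_empty hD', he]
  | insert i s hi ih => rw [hD.multiTwist_insert hD' hdd hd'd' hi, twist_left_unit ih (hde i)]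

theorem IsComposites.multiTwist_right_unit [DecidableEq ι] (hD : IsComposites d D)
    (hD' : IsComposites d' D') (hdd : ∀ i j x, d i (d j x) = d j (d i x))
    (hd'd' : ∀ i j x, d' i (d' j x) = d' j (d' i x)) {e : M} (he : ∀ x, μ x e = x)
    (hd'e : ∀ i, d' i e = 0) (s : Finset ι) (x : M) : μ.multiTwist D D' s x e = x := by
  induction s using Finset.induction_on generalizing x with
  | empty => rw [hD.multiTwist_empty hD', he]
  | insert i s hi ih => rw [hD.multiTwist_insert hD' hdd hd'd' hi, twist_right_unit ih _ (hd'e i)]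

theorem IsAssoc.multiTwist [DecidableEq ι] (hμ : μ.IsAssoc) (hD : IsComposites d D)
    (hD' : IsComposites d' D') (hd : ∀ i, μ.IsLeibniz (d i)) (hd' : ∀ i, μ.IsLeibniz (d' i))
    (hsq : ∀ i x, d i (d i x) = 0) (hsq' : ∀ i x, d' i (d' i x) = 0)
    (hdd : ∀ i j x, d i (d j x) = d j (d i x)) (hd'd' : ∀ i j x, d' i (d' j x) = d' j (d' i x))
    (hdd' : ∀ i j x, d i (d' j x) = d' j (d i x)) (s : Finset ι) :
    (μ.multiTwist D D' s).IsAssoc := by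
  induction s using Finset.induction_on with
  | empty => rwa [hD.multiTwist_empty hD']
  | insert i s hi ih =>
    rw [hD.multiTwist_insert hD' hdd hd'd' hi]
    refine ih.twist ?_ ?_ (hsq i) (hsq' i) (hdd' i i)
    · exact (hd i).multiTwist (hD.apply_comm (hdd i)) (hD'.apply_comm (hdd' i)) s
    · exact (hd' i).multiTwist (hD.apply_comm fun j x => (hdd' j i x).symm)
        (hD'.apply_comm (hd'd' i)) s

end MultiTwist

end LinearMap

/-- Algebraic model of Lemma 4.2: given families d₁,…,d_m and d'₁,…,d'_m of
pairwise-commuting square-zero derivations, with D S (resp. D' S) the composite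
of the dᵢ (resp. d'ᵢ) for i ∈ S, the operation
x∗y = Σ_{S⊆{1,…,m}} (D S x)·(D' S y) is an associative product with unit 1. -/
theorem multi_twisted_product_associative_unital
    {k A : Type*} [CommRing k] [Ring A] [Algebra k A] (m : ℕ)
    (d d' : Fin m → (A →ₗ[k] A))
    (hd_leib : ∀ i (x y : A), d i (x * y) = d i x * y + x * d i y)
    (hd'_leib : ∀ i (x y : A), d' i (x * y) = d' i x * y + x * d' i y)
    (hsq : ∀ i (x : A), d i (d i x) = 0)
    (hsq' : ∀ i (x : A), d' i (d' i x) = 0)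
    (hcomm_dd : ∀ i j (x : A), d i (d j x) = d j (d i x))
    (hcomm_d'd' : ∀ i j (x : A), d' i (d' j x) = d' j (d' i x))
    (hcomm_dd' : ∀ i j (x : A), d i (d' j x) = d' j (d i x))
    (D D' : Finset (Fin m) → (A →ₗ[k] A))
    (hD0 : D ∅ = LinearMap.id) (hD'0 : D' ∅ = LinearMap.id)
    (hDins : ∀ i S, i ∉ S → D (insert i S) = (d i).comp (D S))
    (hD'ins : ∀ i S, i ∉ S → D' (insert i S) = (d' i).comp (D' S))
    (mul' : A → A → A)
    (hmul' : ∀ x y : A, mul' x y = ∑ S : Finset (Fin m), D S x * D' S y) :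
    (∀ x y z : A, mul' (mul' x y) z = mul' x (mul' y z)) ∧
    (∀ x : A, mul' x 1 = x) ∧ (∀ x : A, mul' 1 x = x) := by
  have hD : LinearMap.IsComposites d D := ⟨hD0, hDins⟩
  have hD' : LinearMap.IsComposites d' D' := ⟨hD'0, hD'ins⟩
  have hmul : mul' = fun x y => (LinearMap.mul k A).multiTwist D D' Finset.univ x y := by
    funext x y
    rw [hmul', LinearMap.multiTwist_apply, Finset.powerset_univ]
    rfl
  have hd : ∀ i, LinearMap.IsLeibniz (LinearMap.mul k A) (d i) := hd_leib
  have hd' : ∀ i, LinearMap.IsLeibniz (LinearMap.mul k A) (d' i) := hd'_leib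
  have hd1 i : d i 1 = 0 := (hd i).apply_eq_zero_of_unit one_mul mul_one
  have hd'1 i : d' i 1 = 0 := (hd' i).apply_eq_zero_of_unit one_mul mul_one
  have hassoc : LinearMap.IsAssoc (LinearMap.mul k A) := mul_assoc
  subst hmul
  exact ⟨hassoc.multiTwist hD hD' hd hd' hsq hsq' hcomm_dd hcomm_d'd' hcomm_dd' _,
    hD.multiTwist_right_unit hD' hcomm_dd hcomm_d'd' mul_one hd'1 _,
    hD.multiTwist_left_unit hD' hcomm_dd hcomm_d'd' one_mul hd1 _⟩
end
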